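/- arXiv:2302.01815 — 2 statements merged into one kernel-verified Lean document; each statement's English description precedes it below -/
import Mathlib

section
/- In any MM instance, every matching that is both stable and efficient is student-optimal, i.e., if μ is a stable matching that is dominated by no matching, then every student weakly prefers his outcome under μ to his outcome under every stable matching. -/
/-!
Basic framework for many-to-one matching (MM) instances with two-sided
preferences, following the paper "Optimal Capacity Modification for
Many-to-One Matching Problems".

Preference/priority orders are encoded by rank functions (`rkS`, `rkW`):
a smaller rank means more preferred; ranks are required to be injective
on the respective sets of acceptable partners.
-/

structure MM (U W : Type*) [Fintype U] [Fintype W] [DecidableEq U] [DecidableEq W] where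
  /-- acceptable schools of a student -/
  accS : U → Finset W
  /-- students on a school's priority list -/
  accW : W → Finset U
  /-- every student has a nonempty preference list -/
  acc_ne : ∀ u, (accS u).Nonempty
  /-- mutual acceptability -/
  acc_iff : ∀ u w, u ∈ accW w ↔ w ∈ accS u
  /-- rank of a school in a student's list (smaller = better) -/
  rkS : U → W → ℕ
  /-- rank of a student in a school's priority list (smaller = better) -/
  rkW : W → U → ℕ
  rkS_inj : ∀ u, ∀ w1 ∈ accS u, ∀ w2 ∈ accS u, rkS u w1 = rkS u w2 → w1 = w2
  rkW_inj : ∀ w, ∀ u1 ∈ accW w, ∀ u2 ∈ accW w, rkW w u1 = rkW w u2 → u1 = u2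
  /-- capacities -/
  q : W → ℕ
  q_pos : ∀ w, 1 ≤ q w

namespace MM

variable {U W : Type*} [Fintype U] [Fintype W] [DecidableEq U] [DecidableEq W]

/-- `μ` is a (partial) matching: it assigns only acceptable schools. -/
def IsMatching (I : MM U W) (μ : U → Option W) : Prop :=
  ∀ u w, μ u = some w → w ∈ I.accS u

/-- the set of students assigned to school `w` -/
def assignedTo (μ : U → Option W) (w : W) : Set U := {u | μ u = some w}

/-- the number of students assigned to school `w` -/
noncomputable def load (μ : U → Option W) (w : W) : ℕ := (assignedTo μ w).ncard

/-- `μ` is feasible: it is a matching respecting all capacities. -/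
def Feasible (I : MM U W) (μ : U → Option W) : Prop :=
  I.IsMatching μ ∧ ∀ w, load μ w ≤ I.q w

/-- `μ` is perfect: every student is matched. -/
def Perfect (μ : U → Option W) : Prop := ∀ u, μ u ≠ none

/-- student `u` strictly prefers school `w` to the outcome `o`
(where `o = none` means being unmatched) -/
def PrefOut (I : MM U W) (u : U) (w : W) (o : Option W) : Prop :=
  o = none ∨ ∃ w', o = some w' ∧ I.rkS u w < I.rkS u w'

/-- `(u,w)` is a blocking pair of `μ` -/
def Blocks (I : MM U W) (μ : U → Option W) (u : U) (w : W) : Prop :=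
  u ∈ I.accW w ∧ I.PrefOut u w (μ u) ∧
    (load μ w < I.q w ∨ ∃ u' ∈ assignedTo μ w, I.rkW w u < I.rkW w u')

/-- `μ` is stable: feasible and with no blocking pair -/
def Stable (I : MM U W) (μ : U → Option W) : Prop :=
  I.Feasible μ ∧ ∀ u w, ¬ I.Blocks μ u w

/-- student `u` is strictly better off under `μ` than under `σ` -/
def Better (I : MM U W) (u : U) (μ σ : U → Option W) : Prop :=
  ∃ w, μ u = some w ∧ I.PrefOut u w (σ u)

/-- student `u` weakly prefers `μ` to `σ` -/
def WeakPref (I : MM U W) (u : U) (μ σ : U → Option W) : Prop :=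
  μ u = σ u ∨ I.Better u μ σ

/-- `μ` dominates `σ` -/
def Dominates (I : MM U W) (μ σ : U → Option W) : Prop :=
  (∀ u, I.WeakPref u μ σ) ∧ ∃ u, I.Better u μ σ

/-- `μ` is (Pareto-)efficient: feasible and dominated by no feasible matching -/
def Efficient (I : MM U W) (μ : U → Option W) : Prop :=
  I.Feasible μ ∧ ∀ σ, I.Feasible σ → ¬ I.Dominates σ μ

/-- `μ` is a student-optimal stable matching -/
def StudentOptimal (I : MM U W) (μ : U → Option W) : Prop :=
  I.Stable μ ∧ ∀ σ, I.Stable σ → ∀ u, I.WeakPref u μ σ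

/-- increase capacities by the vector `r` -/
def incCap (I : MM U W) (r : W → ℕ) : MM U W :=
  { I with
    q := fun w => I.q w + r w
    q_pos := fun w => le_trans (I.q_pos w) (Nat.le_add_right _ _) }

/-- replace the capacities by `q'` -/
def withCap (I : MM U W) (q' : W → ℕ) (hq' : ∀ w, 1 ≤ q' w) : MM U W :=
  { I with
    q := q'
    q_pos := hq' }

/-- student `x` justifiedly envies student `y` under `σ` -/
def JEnvy (I : MM U W) (σ : U → Option W) (x y : U) : Prop :=
  ∃ w, σ y = some w ∧ x ∈ I.accW w ∧ I.rkW w x < I.rkW w y ∧ I.PrefOut x w (σ x)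

/-- the set of students unmatched under `μ` -/
def unmatchedSet (μ : U → Option W) : Set U := {u | μ u = none}

/-- `v` is an assignment vector: it assigns to each student unmatched
under `μhat` an acceptable school -/
def IsAsgVec (I : MM U W) (μhat : U → Option W) (v : U → W) : Prop :=
  ∀ u, μhat u = none → v u ∈ I.accS u

/-- `μhat + v` : additionally match every unmatched student `u` to `v u` -/
def extend (μhat : U → Option W) (v : U → W) : U → Option W :=
  fun u => some ((μhat u).getD (v u))

/-- JE(v): the assigned students who justifiedly envy some unassigned student
under `μhat + v` -/
def JEset (I : MM U W) (μhat : U → Option W) (v : U → W) : Set U :=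
  {x | μhat x ≠ none ∧ ∃ y, μhat y = none ∧ I.JEnvy (extend μhat v) x y}

/-- `n_je(v)` -/
noncomputable def nje (I : MM U W) (μhat : U → Option W) (v : U → W) : ℕ :=
  (I.JEset μhat v).ncard

end MM

/-!
Let `μ` be stable and `σ` any stable matching, and let every student take the better of his
two outcomes. At each school `w` the students of this join come either all from `σ` or all
from `μ`: a student `b` who gains `w` from `σ` and a student `v` who keeps `w` from `μ` would
each outrank the other at `w`, since `μ` has no blocking pair `(b, w)` and `σ` none `(v, w)`.
So the join is feasible and weakly dominates `μ`; it strictly dominates `μ` as soon as some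
student strictly prefers `σ`, which efficiency of `μ` forbids.
-/

namespace MM

variable {U W : Type*} [Fintype U] [Fintype W] [DecidableEq U] [DecidableEq W] {I : MM U W}
  {μ σ : U → Option W}

lemma not_prefOut_some_self (u : U) (w : W) : ¬ I.PrefOut u w (some w) := by
  rintro (h | ⟨w', hw', hlt⟩)
  · exact Option.some_ne_none w h
  · cases hw'
    exact lt_irrefl _ hlt

lemma better_of_not_weakPref (hμ : I.IsMatching μ) (hσ : I.IsMatching σ) {u : U}
    (h : ¬ I.WeakPref u μ σ) : I.Better u σ μ := by
  unfold WeakPref Better PrefOut at h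
  push Not at h
  obtain ⟨hne, hnb⟩ := h
  rcases hμu : μ u with _ | w0 <;> rcases hσu : σ u with _ | w1
  · exact absurd (hμu.trans hσu.symm) hne
  · exact ⟨w1, hσu, Or.inl hμu⟩
  · exact absurd hσu (hnb w0 hμu).1
  · have hww : w0 ≠ w1 := fun h => hne (by rw [hμu, hσu, h])
    have hle : I.rkS u w1 ≤ I.rkS u w0 := (hnb w0 hμu).2 w1 hσu
    refine ⟨w1, hσu, Or.inr ⟨w0, hμu, lt_of_le_of_ne hle fun he => hww ?_⟩⟩
    exact I.rkS_inj u w0 (hμ u w0 hμu) w1 (hσ u w1 hσu) he.symm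

lemma Stable.rkW_lt_of_prefOut (hσ : I.Stable σ) {u s : U} {w : W}
    (hacc : u ∈ I.accW w) (hpref : I.PrefOut u w (σ u)) (hs : σ s = some w) :
    I.rkW w s < I.rkW w u := by
  have hle : I.rkW w s ≤ I.rkW w u := by
    by_contra! hlt
    exact hσ.2 u w ⟨hacc, hpref, Or.inr ⟨s, hs, hlt⟩⟩
  refine lt_of_le_of_ne hle fun he => ?_
  have hsu : s = u := I.rkW_inj w s ((I.acc_iff s w).mpr (hσ.1.1 s w hs)) u hacc he
  subst hsu
  rw [hs] at hpref
  exact not_prefOut_some_self s w hpref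

open Classical in
noncomputable def join (I : MM U W) (μ σ : U → Option W) : U → Option W :=
  fun v => if I.Better v σ μ then σ v else μ v

variable {v : U}

lemma join_of_better (h : I.Better v σ μ) : I.join μ σ v = σ v := if_pos h

lemma join_of_not_better (h : ¬ I.Better v σ μ) : I.join μ σ v = μ v := if_neg h

lemma better_join_of_better (h : I.Better v σ μ) : I.Better v (I.join μ σ) μ :=
  h.imp fun _ hw => ⟨(join_of_better h).trans hw.1, hw.2⟩

lemma weakPref_join (u : U) : I.WeakPref u (I.join μ σ) μ := by
  by_cases h : I.Better u σ μ
  · exact Or.inr (better_join_of_better h)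
  · exact Or.inl (join_of_not_better h)

lemma join_eq_some_left {w : W} (hv : I.join μ σ v = some w) (hne : μ v ≠ some w) :
    σ v = some w ∧ I.PrefOut v w (μ v) := by
  by_cases h : I.Better v σ μ
  · rw [join_of_better h] at hv
    obtain ⟨w', hw', hpref⟩ := h
    exact ⟨hv, Option.some_inj.mp (hw'.symm.trans hv) ▸ hpref⟩
  · exact absurd ((join_of_not_better h).symm.trans hv) hne

lemma join_eq_some_right (hμ : I.IsMatching μ) (hσ : I.IsMatching σ) {w : W}
    (hv : I.join μ σ v = some w) (hne : σ v ≠ some w) :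
    μ v = some w ∧ I.PrefOut v w (σ v) := by
  by_cases h : I.Better v σ μ
  · exact absurd ((join_of_better h).symm.trans hv) hne
  · rw [join_of_not_better h] at hv
    have hnw : ¬ I.WeakPref v σ μ := by
      rintro (heq | hb)
      · exact hne (heq.trans hv)
      · exact h hb
    obtain ⟨w', hw', hpref⟩ := better_of_not_weakPref hσ hμ hnw
    exact ⟨hv, Option.some_inj.mp (hw'.symm.trans hv) ▸ hpref⟩

lemma assignedTo_join_subset (hμ : I.Stable μ) (hσ : I.Stable σ) (w : W) :
    assignedTo (I.join μ σ) w ⊆ assignedTo μ w ∨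
      assignedTo (I.join μ σ) w ⊆ assignedTo σ w := by
  by_contra! h
  obtain ⟨⟨b, hbτ, hbμ⟩, ⟨v, hvτ, hvσ⟩⟩ :=
    And.imp Set.not_subset.mp Set.not_subset.mp h
  obtain ⟨hbσ, hbpref⟩ := join_eq_some_left hbτ hbμ
  obtain ⟨hvμ, hvpref⟩ := join_eq_some_right hμ.1.1 hσ.1.1 hvτ hvσ
  have hbv := hσ.rkW_lt_of_prefOut ((I.acc_iff v w).mpr (hμ.1.1 v w hvμ)) hvpref hbσ
  have hvb := hμ.rkW_lt_of_prefOut ((I.acc_iff b w).mpr (hσ.1.1 b w hbσ)) hbpref hvμ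
  exact lt_asymm hbv hvb

lemma feasible_join (hμ : I.Stable μ) (hσ : I.Stable σ) :
    I.Feasible (I.join μ σ) := by
  refine ⟨fun v w hv => ?_, fun w => ?_⟩
  · by_cases h : I.Better v σ μ
    · exact hσ.1.1 v w ((join_of_better h).symm.trans hv)
    · exact hμ.1.1 v w ((join_of_not_better h).symm.trans hv)
  · rcases assignedTo_join_subset hμ hσ w with hsub | hsub
    · exact (Set.ncard_le_ncard hsub (Set.toFinite _)).trans (hμ.1.2 w)
    · exact (Set.ncard_le_ncard hsub (Set.toFinite _)).trans (hσ.1.2 w)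

end MM

/-- every stable and efficient matching is student-optimal. -/
theorem statement_2 {U W : Type*} [Fintype U] [Fintype W] [DecidableEq U] [DecidableEq W]
    (I : MM U W) (μ : U → Option W)
    (hst : I.Stable μ)
    (heff : ∀ σ, I.Feasible σ → ¬ I.Dominates σ μ) :
    ∀ σ, I.Stable σ → ∀ u, I.WeakPref u μ σ := by
  intro σ hσ u
  by_contra hu
  have hσ_better : I.Better u σ μ := MM.better_of_not_weakPref hst.1.1 hσ.1.1 hu
  exact heff _ (MM.feasible_join hst hσ)
    ⟨MM.weakPref_join, u, MM.better_join_of_better hσ_better⟩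
end

section
/- For every n ≥ 1 and ŝ ≥ 1, the instance J(n,ŝ) has a unique stable matching, namely μ̂ = {(d_j,c_j) : j ∈ [ŝ+1]} ∪ {(u_j^ℓ, w_j^ℓ) : j ∈ [ŝ+1], ℓ ∈ [n]}, whose set of unmatched students is exactly U_un = {e_1,…,e_ŝ}; moreover min_{v∈V} n_je(v) = n (so the minimum total capacity increase yielding a stable and perfect matching equals n + ŝ), while the assignment vector v with v(e_i) = c_i for all i ∈ [ŝ] has n_je(v) = n·ŝ. -/
section ExampleJ

/-!
The instance `J(n, ŝ)` of Example 3.8: students `e_1, …, e_ŝ`, and for each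
`j ∈ [ŝ+1]` a student `d_j` and students `u_j^1, …, u_j^n`; schools
`c_1, …, c_{ŝ+1}` and `w_j^ℓ`, all with capacity one.
-/

variable (n s : ℕ)

/-- students: `e_i` (`Sum.inl`), `d_j` (`Sum.inr (Sum.inl _)`),
`u_j^ℓ` (`Sum.inr (Sum.inr _)`) -/
abbrev JStu := Fin s ⊕ (Fin (s + 1) ⊕ (Fin (s + 1) × Fin n))

/-- schools: `c_j` (`Sum.inl`) and `w_j^ℓ` (`Sum.inr`) -/
abbrev JSch := Fin (s + 1) ⊕ (Fin (s + 1) × Fin n)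

def jAccS : JStu n s → Finset (JSch n s)
  | Sum.inl i => {Sum.inl i.castSucc, Sum.inl (Fin.last s)}
  | Sum.inr (Sum.inl j) => {Sum.inl j}
  | Sum.inr (Sum.inr p) => {Sum.inl p.1, Sum.inr p}

def jRkS : JStu n s → JSch n s → ℕ
  | Sum.inl i, Sum.inl j => if j = i.castSucc then 0 else 1
  | Sum.inl _, Sum.inr _ => 0
  | Sum.inr (Sum.inl _), _ => 0
  | Sum.inr (Sum.inr _), Sum.inl _ => 0
  | Sum.inr (Sum.inr _), Sum.inr _ => 1

def jAccW : JSch n s → Finset (JStu n s)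
  | Sum.inl j =>
      insert (Sum.inr (Sum.inl j))
        ((Finset.univ.image (fun ℓ : Fin n => Sum.inr (Sum.inr (j, ℓ)))) ∪
          ((Finset.univ.filter
              (fun i : Fin s => i.castSucc = j ∨ j = Fin.last s)).image Sum.inl))
  | Sum.inr p => {Sum.inr (Sum.inr p)}

def jRkW : JSch n s → JStu n s → ℕ
  | Sum.inl _, Sum.inr (Sum.inl _) => 0
  | Sum.inl _, Sum.inr (Sum.inr p) => 1 + p.2.val
  | Sum.inl _, Sum.inl i => 1 + n + i.val
  | Sum.inr _, _ => 0

/-- the instance `J(n, ŝ)` of Example 3.8 -/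
def JInst : MM (JStu n s) (JSch n s) where
  accS := jAccS n s
  accW := jAccW n s
  acc_ne := by
    rintro (i | j | p)
    · exact ⟨_, Finset.mem_insert_self _ _⟩
    · exact ⟨_, Finset.mem_singleton_self _⟩
    · exact ⟨_, Finset.mem_insert_self _ _⟩
  acc_iff := by
    rintro (i' | j' | p') (j | p) <;>
      simp [jAccS, jAccW, Prod.ext_iff, eq_comm] <;> aesop
  rkS := jRkS n s
  rkW := jRkW n s
  rkS_inj := by
    rintro (i | j | p) w1 h1 w2 h2 heq
    · simp only [jAccS, Finset.mem_insert, Finset.mem_singleton] at h1 h2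
      have hne : Fin.last s ≠ i.castSucc := by
        intro hcon
        have := congrArg Fin.val hcon
        simp [Fin.castSucc] at this
        omega
      rcases h1 with rfl | rfl <;> rcases h2 with rfl | rfl <;>
        simp_all [jRkS]
    · simp only [jAccS, Finset.mem_singleton] at h1 h2; rw [h1, h2]
    · simp only [jAccS, Finset.mem_insert, Finset.mem_singleton] at h1 h2
      rcases h1 with rfl | rfl <;> rcases h2 with rfl | rfl <;> simp_all [jRkS]
  rkW_inj := by
    rintro (j | p) u1 h1 u2 h2 heq
    · simp only [jAccW, Finset.mem_insert, Finset.mem_union, Finset.mem_image,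
        Finset.mem_univ, Finset.mem_filter, true_and] at h1 h2
      rcases h1 with rfl | ⟨ℓ1, rfl⟩ | ⟨i1, _, rfl⟩ <;>
        rcases h2 with rfl | ⟨ℓ2, rfl⟩ | ⟨i2, _, rfl⟩ <;>
        simp_all [jRkW] <;> omega
    · simp only [jAccW, Finset.mem_singleton] at h1 h2; rw [h1, h2]
  q := fun _ => 1
  q_pos := fun _ => le_rfl

/-- the (unique) stable matching of `J(n, ŝ)` -/
def jMuHat : JStu n s → Option (JSch n s)
  | Sum.inl _ => none
  | Sum.inr (Sum.inl j) => some (Sum.inl j)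
  | Sum.inr (Sum.inr p) => some (Sum.inr p)

/-- the assignment vector sending every `e_i` to `c_i` -/
def jVec : JStu n s → JSch n s
  | Sum.inl i => Sum.inl i.castSucc
  | Sum.inr _ => Sum.inl (Fin.last s)

/-!
In a stable matching `d_j`, who has top priority at `c_j`, the only school he accepts, gets `c_j`.
As `c_j` has one seat, every `u_j^ℓ` must then take `w_j^ℓ`, and the `e_i` remain unmatched.

Under `μ̂ + v` the students with justified envy are exactly the `u_j^ℓ` whose `c_j` received some
`e_i`, so `n_je(v) = n · #{j | ∃ i, v(e_i) = c_j}`: at least `n`, equal to `n` when every `e_i` goes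
to `c_{ŝ+1}`, and equal to `n · ŝ` when each `e_i` goes to `c_i`.

If extra seats `r` admit a stable perfect matching and `e_i` sits at `c_j`, then `d_j` and all
`u_j^ℓ`, who outrank `e_i` at `c_j`, sit there as well, so `r(c_j) ≥ n + #{i | e_i at c_j}`.
Summing over the schools `c_j` receiving some `e_i` gives `∑ r ≥ n + ŝ`. Conversely, with `n + ŝ`
extra seats at `c_{ŝ+1}` all `e_i` and `u_{ŝ+1}^ℓ` can join `d_{ŝ+1}` there.
-/

namespace MM

variable {U W : Type*} {μ : U → Option W} {u u' : U} {w w' : W}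

lemma card_le_load [Finite U] {T : Finset U} (hT : ∀ u ∈ T, μ u = some w) : T.card ≤ load μ w := by
  rw [load, ← Set.ncard_coe_finset]
  exact Set.ncard_le_ncard hT (Set.toFinite _)

lemma load_eq_one_of_assignedTo_eq (h : assignedTo μ w = {u}) : load μ w = 1 := by
  rw [load, h, Set.ncard_singleton]

variable [Fintype U] [Fintype W] [DecidableEq U] [DecidableEq W] {I : MM U W}

@[simp] lemma incCap_accS (I : MM U W) (r : W → ℕ) : (I.incCap r).accS = I.accS := rfl

@[simp] lemma incCap_accW (I : MM U W) (r : W → ℕ) : (I.incCap r).accW = I.accW := rfl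

@[simp] lemma incCap_rkS (I : MM U W) (r : W → ℕ) : (I.incCap r).rkS = I.rkS := rfl

@[simp] lemma incCap_rkW (I : MM U W) (r : W → ℕ) : (I.incCap r).rkW = I.rkW := rfl

@[simp] lemma incCap_q (I : MM U W) (r : W → ℕ) (w : W) :
    (I.incCap r).q w = I.q w + r w := rfl

lemma incCap_zero (I : MM U W) : I.incCap 0 = I := rfl

@[simp] lemma prefOut_none : I.PrefOut u w none := Or.inl rfl

@[simp] lemma prefOut_some : I.PrefOut u w (some w') ↔ I.rkS u w < I.rkS u w' := by
  simp [PrefOut]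

lemma not_blocks_iff : ¬ I.Blocks μ u w ↔ (u ∈ I.accW w → I.PrefOut u w (μ u) →
    I.q w ≤ load μ w ∧ ∀ u' ∈ assignedTo μ w, I.rkW w u' ≤ I.rkW w u) := by
  simp [Blocks]

lemma IsMatching.load_le_card_accW (h : I.IsMatching μ) (w : W) :
    load μ w ≤ (I.accW w).card := by
  rw [load, ← Set.ncard_coe_finset]
  exact Set.ncard_le_ncard (fun u hu => (I.acc_iff u w).2 (h u w hu)) (Set.toFinite _)

lemma Feasible.eq_of_q_le_one (h : I.Feasible μ) (hq : I.q w ≤ 1) (hu : μ u = some w)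
    (hu' : μ u' = some w) : u = u' :=
  (Set.ncard_le_one (Set.toFinite _)).1 ((h.2 w).trans hq) u hu u' hu'

lemma Stable.exists_mem_assignedTo (h : I.Stable μ) (hu : u ∈ I.accW w)
    (hp : I.PrefOut u w (μ u)) : ∃ u' ∈ assignedTo μ w, I.rkW w u' ≤ I.rkW w u := by
  obtain ⟨hfull, hle⟩ := not_blocks_iff.1 (h.2 u w) hu hp
  obtain ⟨u', hu'⟩ := (Set.ncard_pos (Set.toFinite _)).1 ((I.q_pos w).trans hfull)
  exact ⟨u', hu', hle u' hu'⟩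

lemma Stable.not_prefOut_of_rkW_lt (h : I.Stable μ) (hu : u ∈ I.accW w)
    (hu' : μ u' = some w) (hlt : I.rkW w u < I.rkW w u') : ¬ I.PrefOut u w (μ u) :=
  fun hp => (not_blocks_iff.1 (h.2 u w) hu hp).2 u' hu' |>.not_gt hlt

lemma Stable.not_prefOut_of_top (h : I.Stable μ) (hu : u ∈ I.accW w)
    (htop : ∀ u' ∈ I.accW w, I.rkW w u ≤ I.rkW w u') : ¬ I.PrefOut u w (μ u) := by
  intro hp
  obtain ⟨u', hu', hle⟩ := h.exists_mem_assignedTo hu hp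
  have hu'w : u' ∈ I.accW w := (I.acc_iff u' w).2 (h.1.1 u' w hu')
  obtain rfl := I.rkW_inj w u' hu'w u hu (hle.antisymm (htop u' hu'w))
  simp [assignedTo] at hu'
  simp [hu'] at hp

end MM

section

open Finset

variable {n s}

lemma assignedTo_jMuHat_inl (j : Fin (s + 1)) :
    MM.assignedTo (jMuHat n s) (Sum.inl j) = {Sum.inr (Sum.inl j)} := by
  ext (i | j' | p) <;> simp [MM.assignedTo, jMuHat, eq_comm]

lemma assignedTo_jMuHat_inr (p : Fin (s + 1) × Fin n) :
    MM.assignedTo (jMuHat n s) (Sum.inr p) = {Sum.inr (Sum.inr p)} := by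
  ext (i | j' | p') <;> simp [MM.assignedTo, jMuHat, eq_comm]

lemma jMuHat_stable : (JInst n s).Stable (jMuHat n s) := by
  refine ⟨⟨?_, ?_⟩, fun u w => MM.not_blocks_iff.2 fun _ _ => ?_⟩
  · rintro (i | j | p) w h <;> simp only [jMuHat, reduceCtorEq, Option.some.injEq] at h <;>
      subst h <;> simp [JInst, jAccS]
  · rintro (j | p)
    · rw [MM.load_eq_one_of_assignedTo_eq (assignedTo_jMuHat_inl j)]; rfl
    · rw [MM.load_eq_one_of_assignedTo_eq (assignedTo_jMuHat_inr p)]; rfl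
  · rcases w with j | p
    · rw [MM.load_eq_one_of_assignedTo_eq (assignedTo_jMuHat_inl j), assignedTo_jMuHat_inl]
      simp [JInst, jRkW]
    · rw [MM.load_eq_one_of_assignedTo_eq (assignedTo_jMuHat_inr p), assignedTo_jMuHat_inr]
      simp [JInst, jRkW]

lemma apply_d_of_stable_incCap {r : JSch n s → ℕ} {μ : JStu n s → Option (JSch n s)}
    (h : ((JInst n s).incCap r).Stable μ) (j : Fin (s + 1)) :
    μ (Sum.inr (Sum.inl j)) = some (Sum.inl j) := by
  have hd := h.not_prefOut_of_top (u := Sum.inr (Sum.inl j)) (w := Sum.inl j)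
    (by simp [JInst, jAccW]) (by simp [JInst, jRkW])
  cases hμ : μ (Sum.inr (Sum.inl j)) with
  | none => simp [hμ] at hd
  | some w => simpa [JInst, jAccS] using h.1.1 _ _ hμ

lemma eq_jMuHat_of_stable {μ : JStu n s → Option (JSch n s)} (h : (JInst n s).Stable μ) :
    μ = jMuHat n s := by
  have hd := apply_d_of_stable_incCap (r := 0) (by rwa [MM.incCap_zero])
  have hc : ∀ u j, μ u = some (Sum.inl j) → u = Sum.inr (Sum.inl j) :=
    fun u j hu => h.1.eq_of_q_le_one le_rfl hu (hd j)
  funext u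
  rcases u with i | j | p
  · cases hμ : μ (Sum.inl i) with
    | none => rfl
    | some w =>
      have hw := h.1.1 _ _ hμ
      simp only [JInst, jAccS, mem_insert, mem_singleton] at hw
      rcases hw with rfl | rfl <;> exact absurd (hc _ _ hμ) (by simp)
  · exact hd j
  · have hp := h.not_prefOut_of_top (u := Sum.inr (Sum.inr p)) (w := Sum.inr p)
      (by simp [JInst, jAccW]) (by simp [JInst, jRkW])
    cases hμ : μ (Sum.inr (Sum.inr p)) with
    | none => simp [hμ] at hp
    | some w =>
      have hw := h.1.1 _ _ hμ
      simp only [JInst, jAccS, mem_insert, mem_singleton] at hw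
      rcases hw with rfl | rfl
      · exact absurd (hc _ _ hμ) (by simp)
      · rfl

lemma exists_eq_inl_of_mem_jAccS_inl {i : Fin s} {w : JSch n s} (hw : w ∈ jAccS n s (Sum.inl i)) :
    ∃ j, w = Sum.inl j := by
  simp only [jAccS, mem_insert, mem_singleton] at hw
  rcases hw with rfl | rfl <;> exact ⟨_, rfl⟩

lemma isAsgVec_of_forall_e {v : JStu n s → JSch n s}
    (hv : ∀ i, v (Sum.inl i) ∈ jAccS n s (Sum.inl i)) : (JInst n s).IsAsgVec (jMuHat n s) v := by
  rintro (i | j | p) h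
  · exact hv i
  all_goals simp [jMuHat] at h

lemma mem_JEset_iff {v : JStu n s → JSch n s} (hv : (JInst n s).IsAsgVec (jMuHat n s) v)
    (x : JStu n s) :
    x ∈ (JInst n s).JEset (jMuHat n s) v ↔
      ∃ p : Fin (s + 1) × Fin n, x = Sum.inr (Sum.inr p) ∧ ∃ i, v (Sum.inl i) = Sum.inl p.1 := by
  constructor
  · rintro ⟨hx, (i | j | p), hy, w, hw, hacc, hrk, hpref⟩
    · obtain ⟨j, hj⟩ := exists_eq_inl_of_mem_jAccS_inl (hv (Sum.inl i) rfl)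
      obtain rfl : w = Sum.inl j := by simpa [MM.extend, jMuHat, hj] using hw.symm
      simp only [JInst, jAccW, mem_insert, mem_union, mem_image,
        mem_univ, mem_filter, true_and] at hacc
      rcases hacc with rfl | ⟨ℓ, rfl⟩ | ⟨i', -, rfl⟩
      · simp [MM.extend, jMuHat] at hpref
      · exact ⟨(j, ℓ), rfl, i, hj⟩
      · simp [jMuHat] at hx
    all_goals simp [jMuHat] at hy
  · rintro ⟨⟨j, ℓ⟩, rfl, i, hvi⟩
    refine ⟨by simp [jMuHat], Sum.inl i, rfl, Sum.inl j, by simp [MM.extend, jMuHat, hvi],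
      by simp [JInst, jAccW], by simp [JInst, jRkW]; omega, ?_⟩
    simp [MM.extend, jMuHat, JInst, jRkS]

lemma nje_eq {v : JStu n s → JSch n s} (hv : (JInst n s).IsAsgVec (jMuHat n s) v) :
    (JInst n s).nje (jMuHat n s) v =
      n * #{j | ∃ i, v (Sum.inl i) = Sum.inl j} := by
  have hJE : (JInst n s).JEset (jMuHat n s) v =
      ↑((({j | ∃ i, v (Sum.inl i) = Sum.inl j} : Finset (Fin (s + 1))) ×ˢ univ).image
        fun p => (Sum.inr (Sum.inr p) : JStu n s)) := by
    ext x
    rw [mem_JEset_iff hv]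
    aesop
  rw [MM.nje, hJE, Set.ncard_coe_finset, card_image_of_injective _ (fun _ _ h => by simpa using h),
    card_product, card_univ, Fintype.card_fin, mul_comm]

lemma n_le_nje (hs : 1 ≤ s) {v : JStu n s → JSch n s}
    (hv : (JInst n s).IsAsgVec (jMuHat n s) v) : n ≤ (JInst n s).nje (jMuHat n s) v := by
  obtain ⟨j, hj⟩ := exists_eq_inl_of_mem_jAccS_inl (hv (Sum.inl ⟨0, hs⟩) rfl)
  rw [nje_eq hv]
  exact Nat.le_mul_of_pos_right n (card_pos.2 ⟨j, mem_filter.2 ⟨mem_univ _, _, hj⟩⟩)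

lemma isAsgVec_const_last :
    (JInst n s).IsAsgVec (jMuHat n s) (fun _ => Sum.inl (Fin.last s)) :=
  isAsgVec_of_forall_e fun _ => by simp [jAccS]

lemma nje_const_last (hs : 1 ≤ s) :
    (JInst n s).nje (jMuHat n s) (fun _ => Sum.inl (Fin.last s)) = n := by
  have : ({j | ∃ _ : Fin s, Sum.inl (Fin.last s) = (Sum.inl j : JSch n s)} : Finset _) =
      {Fin.last s} := by
    ext j
    simp [eq_comm, (Fin.pos_iff_nonempty).1 hs]
  rw [nje_eq isAsgVec_const_last, this, card_singleton, mul_one]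

lemma nje_jVec : (JInst n s).nje (jMuHat n s) (jVec n s) = n * s := by
  have : ({j | ∃ i, jVec n s (Sum.inl i) = Sum.inl j} : Finset (Fin (s + 1))) =
      univ.image Fin.castSucc := by
    ext j
    simp [jVec]
  rw [nje_eq (isAsgVec_of_forall_e fun _ => by simp [jAccS, jVec]), this,
    card_image_of_injective _ (Fin.castSucc_injective s), card_univ, Fintype.card_fin]

lemma isLeast_nje (hs : 1 ≤ s) :
    IsLeast {k | ∃ v, (JInst n s).IsAsgVec (jMuHat n s) v ∧ (JInst n s).nje (jMuHat n s) v = k} n :=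
  ⟨⟨_, isAsgVec_const_last, nje_const_last hs⟩, by rintro _ ⟨v, hv, rfl⟩; exact n_le_nje hs hv⟩

variable (n s) in
def jMuPerfect : JStu n s → Option (JSch n s)
  | Sum.inl _ => some (Sum.inl (Fin.last s))
  | Sum.inr (Sum.inl j) => some (Sum.inl j)
  | Sum.inr (Sum.inr p) =>
      if p.1 = Fin.last s then some (Sum.inl (Fin.last s)) else some (Sum.inr p)

lemma card_jAccW_last : (jAccW n s (Sum.inl (Fin.last s))).card = 1 + (n + s) := by
  rw [jAccW, card_insert_of_notMem (by simp), card_union_of_disjoint (by simp [disjoint_left]),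
    card_image_of_injective _ (fun _ _ h => by simpa using h),
    card_image_of_injective _ Sum.inl_injective, filter_true_of_mem (by simp)]
  simp [add_comm]

lemma assignedTo_jMuPerfect_inl {j : Fin (s + 1)} (hj : j ≠ Fin.last s) :
    MM.assignedTo (jMuPerfect n s) (Sum.inl j) = {Sum.inr (Sum.inl j)} := by
  ext (i | j' | ⟨j', ℓ⟩)
  · simp [MM.assignedTo, jMuPerfect, Ne.symm hj]
  · simp [MM.assignedTo, jMuPerfect, eq_comm]
  · by_cases h' : j' = Fin.last s <;> simp [MM.assignedTo, jMuPerfect, h', Ne.symm hj]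

lemma prefOut_jMuPerfect {u : JStu n s} {w : JSch n s} (hu : u ∈ jAccW n s w)
    (hp : (JInst n s).PrefOut u w (jMuPerfect n s u)) : ∃ j ≠ Fin.last s, w = Sum.inl j := by
  rcases u with i | j | ⟨j, ℓ⟩ <;> rcases w with j' | p <;>
    simp [jAccW, jMuPerfect, JInst] at hu hp <;> aesop (add simp jRkS)

lemma jMuPerfect_isMatching : (JInst n s).IsMatching (jMuPerfect n s) := by
  rintro (i | j | ⟨j, ℓ⟩) w h
  · cases h; simp [JInst, jAccS]
  · cases h; simp [JInst, jAccS]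
  · simp only [jMuPerfect] at h
    split_ifs at h with hj <;> cases h <;> simp [JInst, jAccS, hj]

lemma jMuPerfect_stable :
    ((JInst n s).incCap (Pi.single (Sum.inl (Fin.last s)) (n + s))).Stable (jMuPerfect n s) := by
  refine ⟨⟨jMuPerfect_isMatching, fun w => ?_⟩, fun u w => MM.not_blocks_iff.2 fun hu hp => ?_⟩
  · rcases w with j | p
    · by_cases hj : j = Fin.last s
      · subst hj
        calc MM.load (jMuPerfect n s) (Sum.inl (Fin.last s))
            _ ≤ (jAccW n s (Sum.inl (Fin.last s))).card :=
              jMuPerfect_isMatching.load_le_card_accW _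
            _ = _ := by simp [card_jAccW_last, JInst]
      · rw [MM.load_eq_one_of_assignedTo_eq (assignedTo_jMuPerfect_inl hj)]
        simp [JInst]
    · calc MM.load (jMuPerfect n s) (Sum.inr p)
          _ ≤ (jAccW n s (Sum.inr p)).card := jMuPerfect_isMatching.load_le_card_accW _
          _ ≤ _ := by simp [jAccW, JInst]
  · obtain ⟨j, hj, rfl⟩ := prefOut_jMuPerfect hu hp
    rw [MM.load_eq_one_of_assignedTo_eq (assignedTo_jMuPerfect_inl hj),
      assignedTo_jMuPerfect_inl hj]
    simp [JInst, jRkW, hj]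

lemma jMuPerfect_perfect : MM.Perfect (jMuPerfect n s) := by
  rintro (i | j | ⟨j, ℓ⟩) <;> simp [jMuPerfect]
  split_ifs <;> simp

lemma apply_u_of_stable_incCap {r : JSch n s → ℕ} {μ : JStu n s → Option (JSch n s)}
    (h : ((JInst n s).incCap r).Stable μ) {i : Fin s} {j : Fin (s + 1)}
    (hi : μ (Sum.inl i) = some (Sum.inl j)) (ℓ : Fin n) :
    μ (Sum.inr (Sum.inr (j, ℓ))) = some (Sum.inl j) := by
  have hp := h.not_prefOut_of_rkW_lt (u := Sum.inr (Sum.inr (j, ℓ))) (by simp [JInst, jAccW]) hi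
    (by simp [JInst, jRkW]; omega)
  cases hμ : μ (Sum.inr (Sum.inr (j, ℓ))) with
  | none => simp [hμ] at hp
  | some w =>
    have hw := h.1.1 _ _ hμ
    simp only [MM.incCap_accS, JInst, jAccS, mem_insert, mem_singleton] at hw
    rcases hw with rfl | rfl
    · rfl
    · simp [hμ, JInst, jRkS] at hp

lemma add_card_fiber_le {r : JSch n s → ℕ} {μ : JStu n s → Option (JSch n s)}
    (h : ((JInst n s).incCap r).Stable μ) {g : Fin s → Fin (s + 1)}
    (hg : ∀ i, μ (Sum.inl i) = some (Sum.inl (g i))) {j : Fin (s + 1)} (hj : j ∈ univ.image g) :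
    n + #{i | g i = j} ≤ r (Sum.inl j) := by
  obtain ⟨i₀, -, rfl⟩ := mem_image.1 hj
  let T : Finset (JStu n s) := insert (Sum.inr (Sum.inl (g i₀)))
    (univ.image (fun ℓ => Sum.inr (Sum.inr (g i₀, ℓ))) ∪
      ({i | g i = g i₀} : Finset _).image Sum.inl)
  have hT : T.card = 1 + (n + #{i | g i = g i₀}) := by
    rw [card_insert_of_notMem (by simp), card_union_of_disjoint (by simp [disjoint_left]),
      card_image_of_injective _ (fun _ _ h => by simpa using h),
      card_image_of_injective _ Sum.inl_injective, card_univ, Fintype.card_fin, add_comm]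
  have hload : T.card ≤ MM.load μ (Sum.inl (g i₀)) := by
    refine MM.card_le_load fun u hu => ?_
    simp only [T, mem_insert, mem_union, mem_image, mem_univ, mem_filter, true_and] at hu
    rcases hu with rfl | ⟨ℓ, rfl⟩ | ⟨i, hi, rfl⟩
    · exact apply_d_of_stable_incCap h _
    · exact apply_u_of_stable_incCap h (hg i₀) ℓ
    · rw [hg, hi]
  have hcap := h.1.2 (Sum.inl (g i₀))
  simp only [MM.incCap_q, JInst] at hcap
  omega

lemma add_le_sum_of_stable_perfect (hs : 1 ≤ s) {r : JSch n s → ℕ}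
    {μ : JStu n s → Option (JSch n s)} (h : ((JInst n s).incCap r).Stable μ)
    (hpf : MM.Perfect μ) : n + s ≤ ∑ w, r w := by
  have he : ∀ i, ∃ j, μ (Sum.inl i) = some (Sum.inl j) := by
    intro i
    obtain ⟨w, hw⟩ := Option.ne_none_iff_exists'.1 (hpf (Sum.inl i))
    obtain ⟨j, rfl⟩ := exists_eq_inl_of_mem_jAccS_inl (h.1.1 _ _ hw)
    exact ⟨j, hw⟩
  choose g hg using he
  have himage : 1 ≤ #(univ.image g) := card_pos.2 (univ_nonempty_iff.2 ⟨⟨0, hs⟩⟩ |>.image g)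
  calc n + s ≤ n * #(univ.image g) + s := by gcongr; exact Nat.le_mul_of_pos_right n himage
    _ = ∑ j ∈ univ.image g, (n + #{i | g i = j}) := by
      rw [sum_add_distrib, sum_const, smul_eq_mul, mul_comm, ← card_eq_sum_card_image, card_univ,
        Fintype.card_fin]
    _ ≤ ∑ j ∈ univ.image g, r (Sum.inl j) := sum_le_sum fun j hj => add_card_fiber_le h hg hj
    _ ≤ ∑ j, r (Sum.inl j) := sum_le_sum_of_subset (subset_univ _)
    _ ≤ ∑ w, r w := by rw [Fintype.sum_sum_type]; exact Nat.le_add_right _ _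

lemma isLeast_capacityIncrease (hs : 1 ≤ s) :
    IsLeast {t | ∃ r : JSch n s → ℕ, ∑ w, r w = t ∧
      ∃ μ, ((JInst n s).incCap r).Stable μ ∧ MM.Perfect μ} (n + s) :=
  ⟨⟨_, Fintype.sum_pi_single' _ _, _, jMuPerfect_stable, jMuPerfect_perfect⟩,
    by rintro _ ⟨r, rfl, μ, h, hpf⟩; exact add_le_sum_of_stable_perfect hs h hpf⟩

end

theorem statement_11 (hs : 1 ≤ s) :
    (JInst n s).Stable (jMuHat n s) ∧
    (∀ μ : JStu n s → Option (JSch n s), (JInst n s).Stable μ → μ = jMuHat n s) ∧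
    MM.unmatchedSet (jMuHat n s) = {u : JStu n s | ∃ i, u = Sum.inl i} ∧
    sInf {k : ℕ | ∃ v : JStu n s → JSch n s,
        (JInst n s).IsAsgVec (jMuHat n s) v ∧ (JInst n s).nje (jMuHat n s) v = k} = n ∧
    sInf {t : ℕ | ∃ r : JSch n s → ℕ, (∑ w, r w) = t ∧
        ∃ μ : JStu n s → Option (JSch n s),
          ((JInst n s).incCap r).Stable μ ∧ MM.Perfect μ} = n + s ∧
    (JInst n s).nje (jMuHat n s) (jVec n s) = n * s := by
  refine ⟨jMuHat_stable, fun _ => eq_jMuHat_of_stable, ?_, (isLeast_nje hs).csInf_eq,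
    (isLeast_capacityIncrease hs).csInf_eq, nje_jVec⟩
  ext (i | j | p) <;> simp [MM.unmatchedSet, jMuHat]

end ExampleJ
end
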